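/- arXiv:2401.00448 — 8 statements merged into one kernel-verified Lean document; each statement's English description precedes it below -/
import Mathlib

section
/- Let A, B > 0, α, β > 0, D_inf ≥ 0 be real numbers and let N > 0, D > 0 and λ be reals satisfying the two Lagrange stationarity conditions 6·D + 2·D_inf = −λ·α·A·N^(−α−1) and 6·N = −λ·β·B·D^(−β−1). Then A·N^(−α) = (3·β·B·D^(−β) + D_inf·β·B·D^(−β−1)) / (3·α). -/
/-- Stationarity conditions of the Lagrange multiplier method for minimizing
training-plus-inference compute `C(N, D, D_inf) = 6·N·D + 2·N·D_inf` subject to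
fixed Chinchilla loss imply `A·N^(−α) = (3·β·B·D^(−β) + D_inf·β·B·D^(−β−1)) / (3·α)`. -/
theorem no_analytic_eq10 (A B α β Dinf N D lam : ℝ)
    (hA : 0 < A) (hB : 0 < B) (hα : 0 < α) (hβ : 0 < β) (hDinf : 0 ≤ Dinf)
    (hN : 0 < N) (hD : 0 < D)
    (h1 : 6 * D + 2 * Dinf = -lam * α * A * N ^ (-α - 1))
    (h2 : 6 * N = -lam * β * B * D ^ (-β - 1)) :
    A * N ^ (-α) = (3 * β * B * D ^ (-β) + Dinf * β * B * D ^ (-β - 1)) / (3 * α) := by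
  have ha : (0:ℝ) < N ^ (-α) := Real.rpow_pos_of_pos hN _
  have hb : (0:ℝ) < D ^ (-β) := Real.rpow_pos_of_pos hD _
  have e1 : N ^ (-α - 1) = N ^ (-α) / N := by
    rw [Real.rpow_sub hN, Real.rpow_one]
  have e2 : D ^ (-β - 1) = D ^ (-β) / D := by
    rw [Real.rpow_sub hD, Real.rpow_one]
  rw [e1] at h1
  rw [e2] at h2 ⊢
  have hlam : lam ≠ 0 := by
    intro h
    rw [h] at h2
    simp at h2
    nlinarith
  set a := N ^ (-α)
  set b := D ^ (-β)
  field_simp at h1 h2 ⊢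
  -- h1 : (6*D + 2*Dinf) * N = -lam * α * A * a  (shape may vary)
  -- h2 : 6*N*D = -lam * β * B * b
  -- goal: A * a * (3*α) * D = (3*β*B*b + Dinf*β*B*b/D-cleared) ...
  have key : lam * (A * a * (3 * α * D) - (3 * β * B * b * D + Dinf * β * B * b)) = 0 := by
    nlinarith [h1, h2, mul_pos hN hD, sq_nonneg lam]
  have := mul_eq_zero.mp key
  rcases this with h | h
  · exact absurd h hlam
  · linarith [sub_eq_zero.mp h]
end

section
/- Let A, B > 0, α, β > 0, D_inf ≥ 0, E, ℓ be real numbers and let N > 0, D > 0 and λ be reals satisfying 6·D + 2·D_inf = −λ·α·A·N^(−α−1), 6·N = −λ·β·B·D^(−β−1), and the constraint E + A·N^(−α) + B·D^(−β) = ℓ. Then D satisfies 0 = (E − ℓ) + (β·B/α + B)·D^(−β) + (D_inf·β·B/(3·α))·D^(−β−1). -/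
/-! Eliminating the multiplier from the two stationarity conditions gives
`α·A·N^(−α) = β·B·(D + D_inf/3)·D^(−β−1)`, so the `N`-term of the loss is a function of `D`;
substituting it into the iso-loss constraint leaves an equation in `D` alone. -/

lemma mul_rpow_sub_one {x : ℝ} (hx : x ≠ 0) (y : ℝ) : x * x ^ (y - 1) = x ^ y := by
  rw [Real.rpow_sub_one hx, mul_div_cancel₀ _ hx]

/-- Stationarity of `6·N·D + 2·N·D_inf` against a loss with partial derivatives `−a·p` in `N`
and `−b·q` in `D`. -/
lemma lagrange_multiplier_elim {N D Dinf lam a b p q : ℝ} (hN : N ≠ 0)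
    (hdN : 6 * D + 2 * Dinf = -lam * a * p) (hdD : 6 * N = -lam * b * q) :
    a * N * p = b * (D + Dinf / 3) * q := by
  have hlam : -lam ≠ 0 := by
    intro hlam
    exact hN (by linear_combination hdD / 6 + b * q / 6 * hlam)
  apply mul_left_cancel₀ hlam
  linear_combination (D + Dinf / 3) * hdD - N * hdN

theorem no_analytic_eq11_general (A B α β Dinf E ℓ N D lam : ℝ)
    (hα : 0 < α) (hN : 0 < N) (hD : 0 < D)
    (h1 : 6 * D + 2 * Dinf = -lam * α * A * N ^ (-α - 1))
    (h2 : 6 * N = -lam * β * B * D ^ (-β - 1))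
    (hcon : E + A * N ^ (-α) + B * D ^ (-β) = ℓ) :
    0 = (E - ℓ) + (β * B / α + B) * D ^ (-β)
        + (Dinf * β * B / (3 * α)) * D ^ (-β - 1) := by
  have hbal : α * A * N * N ^ (-α - 1) = β * B * (D + Dinf / 3) * D ^ (-β - 1) :=
    lagrange_multiplier_elim (lam := lam) hN.ne' (by linear_combination h1)
      (by linear_combination h2)
  rw [← mul_rpow_sub_one hN.ne' (-α), ← mul_rpow_sub_one hD.ne' (-β)] at hcon
  rw [← mul_rpow_sub_one hD.ne' (-β)]
  field_simp
  linear_combination (-3 * α) * hcon + 3 * hbal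

/-- The Lagrange stationarity conditions together with the iso-loss constraint
`E + A·N^(−α) + B·D^(−β) = ℓ` imply Eq. 11 of the paper. -/
theorem no_analytic_eq11 (A B α β Dinf E ℓ N D lam : ℝ)
    (hA : 0 < A) (hB : 0 < B) (hα : 0 < α) (hβ : 0 < β) (hDinf : 0 ≤ Dinf)
    (hN : 0 < N) (hD : 0 < D)
    (h1 : 6 * D + 2 * Dinf = -lam * α * A * N ^ (-α - 1))
    (h2 : 6 * N = -lam * β * B * D ^ (-β - 1))
    (hcon : E + A * N ^ (-α) + B * D ^ (-β) = ℓ) :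
    0 = (E - ℓ) + (β * B / α + B) * D ^ (-β)
        + (Dinf * β * B / (3 * α)) * D ^ (-β - 1) :=
  no_analytic_eq11_general A B α β Dinf E ℓ N D lam hα hN hD h1 h2 hcon
end

section
/- Let A, B > 0, α, β > 0, D_inf ≥ 0, E, ℓ be real numbers with ℓ > E. Then the equation 0 = (E − ℓ) + (β·B/α + B)·D^(−β) + (D_inf·β·B/(3·α))·D^(−β−1) has exactly one solution D in (0, ∞). -/
/-- For `ℓ > E`, Eq. 11 has exactly one solution `D` in `(0, ∞)`. -/
theorem eq11_unique_solution (A B α β Dinf E ℓ : ℝ)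
    (hA : 0 < A) (hB : 0 < B) (hα : 0 < α) (hβ : 0 < β) (hDinf : 0 ≤ Dinf)
    (hℓ : E < ℓ) :
    ∃! D : ℝ, 0 < D ∧
      0 = (E - ℓ) + (β * B / α + B) * D ^ (-β)
        + (Dinf * β * B / (3 * α)) * D ^ (-β - 1) := by
  set c1 : ℝ := β * B / α + B with hc1def
  set c2 : ℝ := Dinf * β * B / (3 * α) with hc2def
  have hc1 : 0 < c1 := by positivity
  have hc2 : 0 ≤ c2 := by positivity
  have hk : 0 < ℓ - E := by linarith
  set g : ℝ → ℝ := fun D => c1 * D ^ (-β) + c2 * D ^ (-β - 1) with hg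
  have hβneg : -β < 0 := by linarith
  have hβ1neg : -β - 1 < 0 := by linarith
  -- strict anti
  have hanti : ∀ x y : ℝ, 0 < x → x < y → g y < g x := by
    intro x y hx hxy
    have h1 : y ^ (-β) < x ^ (-β) := Real.rpow_lt_rpow_of_neg hx hxy hβneg
    have h2 : y ^ (-β - 1) ≤ x ^ (-β - 1) :=
      Real.rpow_le_rpow_of_nonpos hx hxy.le hβ1neg.le
    have := mul_lt_mul_of_pos_left h1 hc1
    have := mul_le_mul_of_nonneg_left h2 hc2
    simp only [hg]
    linarith
  -- small endpoint a : g a ≥ ℓ - E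
  set a : ℝ := ((ℓ - E) / c1) ^ (-β⁻¹) with hadef
  have hq : (0:ℝ) < (ℓ - E) / c1 := by positivity
  have ha : 0 < a := Real.rpow_pos_of_pos hq _
  have haval : a ^ (-β) = (ℓ - E) / c1 := by
    rw [hadef, ← Real.rpow_mul hq.le]
    rw [show -β⁻¹ * -β = β⁻¹ * β by ring, inv_mul_cancel₀ (ne_of_gt hβ), Real.rpow_one]
  have hga : ℓ - E ≤ g a := by
    have h2 : 0 ≤ c2 * a ^ (-β - 1) := by
      have := Real.rpow_pos_of_pos ha (-β - 1)
      positivity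
    have h1 : c1 * a ^ (-β) = ℓ - E := by
      rw [haval]; field_simp
    simp only [hg]; linarith
  -- large endpoint b : g b ≤ ℓ - E
  set t : ℝ := ((ℓ - E) / (c1 + c2)) ^ (-β⁻¹) with htdef
  have hqt : (0:ℝ) < (ℓ - E) / (c1 + c2) := by positivity
  have ht : 0 < t := Real.rpow_pos_of_pos hqt _
  have htval : t ^ (-β) = (ℓ - E) / (c1 + c2) := by
    rw [htdef, ← Real.rpow_mul hqt.le]
    rw [show -β⁻¹ * -β = β⁻¹ * β by ring, inv_mul_cancel₀ (ne_of_gt hβ), Real.rpow_one]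
  set b : ℝ := max a (max 1 t) with hbdef
  have hb1 : (1:ℝ) ≤ b := le_trans (le_max_left 1 t) (le_max_right _ _)
  have hbt : t ≤ b := le_trans (le_max_right 1 t) (le_max_right _ _)
  have hab : a ≤ b := le_max_left _ _
  have hb : 0 < b := lt_of_lt_of_le one_pos hb1
  have hgb : g b ≤ ℓ - E := by
    have h1 : b ^ (-β) ≤ t ^ (-β) := Real.rpow_le_rpow_of_nonpos ht hbt hβneg.le
    have h2 : b ^ (-β - 1) ≤ b ^ (-β) := by
      apply Real.rpow_le_rpow_of_exponent_le hb1
      linarith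
    have h3 : c1 * b ^ (-β) + c2 * b ^ (-β - 1) ≤ (c1 + c2) * t ^ (-β) := by
      nlinarith [mul_le_mul_of_nonneg_left h2 hc2, mul_le_mul_of_nonneg_left h1 hc1.le,
        mul_le_mul_of_nonneg_left (h2.trans h1) hc2]
    have h4 : (c1 + c2) * t ^ (-β) = ℓ - E := by
      rw [htval]; field_simp
    simp only [hg]; linarith
  -- continuity on [a, b]
  have hcont : ContinuousOn g (Set.Icc a b) := by
    have hne : ∀ x ∈ Set.Icc a b, x ≠ 0 ∨ 0 < (0:ℝ) := by
      intro x hx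
      exact Or.inl (ne_of_gt (lt_of_lt_of_le ha hx.1))
    apply ContinuousOn.add
    · exact continuousOn_const.mul (continuousOn_id.rpow_const
        (fun x hx => Or.inl (ne_of_gt (lt_of_lt_of_le ha hx.1))))
    · exact continuousOn_const.mul (continuousOn_id.rpow_const
        (fun x hx => Or.inl (ne_of_gt (lt_of_lt_of_le ha hx.1))))
  -- IVT
  have hmem : ℓ - E ∈ Set.Icc (g b) (g a) := ⟨hgb, hga⟩
  obtain ⟨D, hD, hgD⟩ := intermediate_value_Icc' hab hcont hmem
  have hDpos : 0 < D := lt_of_lt_of_le ha hD.1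
  have hDeq : 0 = (E - ℓ) + c1 * D ^ (-β) + c2 * D ^ (-β - 1) := by
    have : g D = c1 * D ^ (-β) + c2 * D ^ (-β - 1) := rfl
    linarith [hgD ▸ this]
  refine ⟨D, ⟨hDpos, hDeq⟩, ?_⟩
  rintro D' ⟨hD'pos, hD'eq⟩
  have hgD' : g D' = ℓ - E := by
    have : g D' = c1 * D' ^ (-β) + c2 * D' ^ (-β - 1) := rfl
    linarith
  have hgDv : g D = ℓ - E := by
    have : g D = c1 * D ^ (-β) + c2 * D ^ (-β - 1) := rfl
    linarith
  rcases lt_trichotomy D' D with h | h | h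
  · exact absurd (hgD' ▸ hgDv ▸ hanti D' D hD'pos h) (lt_irrefl _)
  · exact h
  · exact absurd (hgDv ▸ hgD' ▸ hanti D D' hDpos h) (lt_irrefl _)
end

section
/- Let A, B > 0, α, β > 0, E, ℓ be real numbers with ℓ > E, and let 0 ≤ D_inf1 < D_inf2. Let D1 and D2 be the unique positive solutions of 0 = (E − ℓ) + (β·B/α + B)·D^(−β) + (D_inf·β·B/(3·α))·D^(−β−1) for D_inf = D_inf1 and D_inf = D_inf2 respectively. Then D1 < D2. -/
/-- Higher inference demand shifts the compute-optimal training token count upward: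
if `D1`, `D2` are the (unique) positive solutions of Eq. 11 for inference demands
`D_inf1 < D_inf2`, then `D1 < D2`. -/
theorem optimal_tokens_increase (A B α β Dinf1 Dinf2 E ℓ D1 D2 : ℝ)
    (hA : 0 < A) (hB : 0 < B) (hα : 0 < α) (hβ : 0 < β) (hℓ : E < ℓ)
    (hDinf1 : 0 ≤ Dinf1) (hDinf : Dinf1 < Dinf2)
    (hD1pos : 0 < D1)
    (hD1 : 0 = (E - ℓ) + (β * B / α + B) * D1 ^ (-β)
        + (Dinf1 * β * B / (3 * α)) * D1 ^ (-β - 1))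
    (hD2pos : 0 < D2)
    (hD2 : 0 = (E - ℓ) + (β * B / α + B) * D2 ^ (-β)
        + (Dinf2 * β * B / (3 * α)) * D2 ^ (-β - 1)) :
    D1 < D2 := by
  by_contra h
  push_neg at h  -- h : D2 ≤ D1
  have hC : 0 < β * B / α + B := by positivity
  have hk : 0 < β * B / (3 * α) := by positivity
  have h1 : D1 ^ (-β) ≤ D2 ^ (-β) :=
    Real.rpow_le_rpow_of_nonpos hD2pos h (by linarith)
  have h2 : D1 ^ (-β - 1) ≤ D2 ^ (-β - 1) :=
    Real.rpow_le_rpow_of_nonpos hD2pos h (by linarith)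
  have hp1 : 0 < D1 ^ (-β - 1) := Real.rpow_pos_of_pos hD1pos _
  have hlt : Dinf1 * β * B / (3 * α) * D1 ^ (-β - 1)
      < Dinf2 * β * B / (3 * α) * D1 ^ (-β - 1) := by
    apply mul_lt_mul_of_pos_right _ hp1
    have : Dinf1 * (β * B / (3 * α)) < Dinf2 * (β * B / (3 * α)) := by
      exact mul_lt_mul_of_pos_right hDinf hk
    calc Dinf1 * β * B / (3 * α) = Dinf1 * (β * B / (3 * α)) := by ring
      _ < Dinf2 * (β * B / (3 * α)) := this
      _ = Dinf2 * β * B / (3 * α) := by ring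
  have hle2 : Dinf2 * β * B / (3 * α) * D1 ^ (-β - 1)
      ≤ Dinf2 * β * B / (3 * α) * D2 ^ (-β - 1) := by
    apply mul_le_mul_of_nonneg_left h2
    have : 0 ≤ Dinf2 := le_of_lt (lt_of_le_of_lt hDinf1 hDinf)
    positivity
  have hle1 : (β * B / α + B) * D1 ^ (-β) ≤ (β * B / α + B) * D2 ^ (-β) :=
    mul_le_mul_of_nonneg_left h1 hC.le
  linarith
end

section
/- Let A, B > 0, α, β > 0, E, ℓ be real numbers with ℓ > E, let 0 ≤ D_inf1 < D_inf2, and let D1 < D2 (with D1, D2 > D_min = (B/(ℓ − E))^(1/β)) be the unique positive solutions of 0 = (E − ℓ) + (β·B/α + B)·D^(−β) + (D_inf·β·B/(3·α))·D^(−β−1) for D_inf = D_inf1 and D_inf = D_inf2 respectively. Then the corresponding optimal parameter counts satisfy N(D2) < N(D1), where N(D) = (A/(ℓ − E − B·D^(−β)))^(1/α). -/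
/-- Higher inference demand makes the compute-optimal model smaller: with `D1 < D2`
the positive solutions of Eq. 11 for `D_inf1 < D_inf2` (both above `D_min`), the
optimal parameter counts satisfy `N(D2) < N(D1)`. -/
theorem optimal_params_decrease (A B α β Dinf1 Dinf2 E ℓ D1 D2 : ℝ)
    (hA : 0 < A) (hB : 0 < B) (hα : 0 < α) (hβ : 0 < β) (hℓ : E < ℓ)
    (hDinf1 : 0 ≤ Dinf1) (hDinf : Dinf1 < Dinf2)
    (hDmin1 : (B / (ℓ - E)) ^ (1 / β) < D1) (hDmin2 : (B / (ℓ - E)) ^ (1 / β) < D2)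
    (hD12 : D1 < D2)
    (hD1 : 0 = (E - ℓ) + (β * B / α + B) * D1 ^ (-β)
        + (Dinf1 * β * B / (3 * α)) * D1 ^ (-β - 1))
    (hD2 : 0 = (E - ℓ) + (β * B / α + B) * D2 ^ (-β)
        + (Dinf2 * β * B / (3 * α)) * D2 ^ (-β - 1)) :
    (A / (ℓ - E - B * D2 ^ (-β))) ^ (1 / α)
      < (A / (ℓ - E - B * D1 ^ (-β))) ^ (1 / α) := by
  have hle : (0:ℝ) < ℓ - E := by linarith
  have hq : (0:ℝ) < B / (ℓ - E) := div_pos hB hle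
  have hdm : (0:ℝ) < (B / (ℓ - E)) ^ (1 / β) := Real.rpow_pos_of_pos hq _
  have hD1pos : 0 < D1 := lt_trans hdm hDmin1
  have hD2pos : 0 < D2 := lt_trans hD1pos hD12
  -- D1^β > B/(ℓ-E)
  have key : B / (ℓ - E) < D1 ^ β := by
    have := Real.rpow_lt_rpow hdm.le hDmin1 hβ
    rwa [← Real.rpow_mul hq.le, one_div, inv_mul_cancel₀ hβ.ne', Real.rpow_one] at this
  have hβ1pos : (0:ℝ) < D1 ^ β := Real.rpow_pos_of_pos hD1pos _
  have hβ2pos : (0:ℝ) < D2 ^ β := Real.rpow_pos_of_pos hD2pos _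
  have hβmono : D1 ^ β < D2 ^ β := Real.rpow_lt_rpow hD1pos.le hD12 hβ
  have hneg1 : D1 ^ (-β) = (D1 ^ β)⁻¹ := by rw [Real.rpow_neg hD1pos.le]
  have hneg2 : D2 ^ (-β) = (D2 ^ β)⁻¹ := by rw [Real.rpow_neg hD2pos.le]
  have hinv : (D2 ^ β)⁻¹ < (D1 ^ β)⁻¹ := by
    exact inv_strictAnti₀ hβ1pos hβmono
  have hd1pos : 0 < ℓ - E - B * D1 ^ (-β) := by
    rw [hneg1]
    have : B * (D1 ^ β)⁻¹ < ℓ - E := by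
      rw [← div_eq_mul_inv]
      rw [div_lt_iff₀ hβ1pos]
      have := (div_lt_iff₀ hle).mp key
      linarith [mul_comm (ℓ - E) (D1 ^ β)]
    linarith
  have hBmono : B * D2 ^ (-β) < B * D1 ^ (-β) := by
    rw [hneg1, hneg2]
    exact mul_lt_mul_of_pos_left hinv hB
  have hd2pos : 0 < ℓ - E - B * D2 ^ (-β) := by linarith
  have hdlt : ℓ - E - B * D1 ^ (-β) < ℓ - E - B * D2 ^ (-β) := by linarith
  have hdivlt : A / (ℓ - E - B * D2 ^ (-β)) < A / (ℓ - E - B * D1 ^ (-β)) :=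
    div_lt_div_of_pos_left hA hd1pos hdlt
  have hpos : 0 < A / (ℓ - E - B * D2 ^ (-β)) := div_pos hA hd2pos
  exact Real.rpow_lt_rpow hpos.le hdivlt (by positivity)
end

section
/- Let A, B > 0, α, β > 0, D_inf ≥ 0, E, ℓ be real numbers with ℓ > E, and set D_min = (B/(ℓ − E))^(1/β). If D* > D_min is a local minimum of C(D) = (6·D + 2·D_inf)·(A/(ℓ − E − B·D^(−β)))^(1/α) on (D_min, ∞), then D* satisfies Eq. 11: 0 = (E − ℓ) + (β·B/α + B)·(D*)^(−β) + (D_inf·β·B/(3·α))·(D*)^(−β−1). -/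
/-!
The interval `(D_min, ∞)` is open and is exactly where `g(D) = ℓ - E - B·D^(-β)` is positive, so a
local minimum of `C(D) = (6D + 2D_inf)·N(D)`, `N(D) = (A/g(D))^(1/α)`, is a critical point. The
logarithmic derivative `N'/N = -g'/(α g)` with `g' = βB·D^(-β-1)` gives
`C' = N·(6 - (6D + 2D_inf)·βB·D^(-β-1)/(α g))`; as `N > 0`, `C'(D*) = 0` reads
`6α·g(D*) = (6D* + 2D_inf)·βB·D*^(-β-1)`, which is Eq. 11 after dividing by `-6α` and
using `D^(-β) = D·D^(-β-1)`.
-/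

open Real

theorem HasDerivAt.const_div_rpow {g : ℝ → ℝ} {g' x : ℝ} (A p : ℝ) (hg : HasDerivAt g g' x)
    (hgx : g x ≠ 0) (hA : A ≠ 0) :
    HasDerivAt (fun y => (A / g y) ^ p) (-p * (A / g x) ^ p * g' / g x) x := by
  have hAg : A / g x ≠ 0 := div_ne_zero hA hgx
  refine (((hasDerivAt_const x A).div hg hgx).rpow_const (Or.inl hAg)).congr_deriv ?_
  rw [Pi.div_apply, rpow_sub_one hAg]
  field_simp
  ring

theorem sub_mul_rpow_neg_pos {B c β D : ℝ} (hB : 0 ≤ B) (hc : 0 < c) (hβ : 0 < β)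
    (hD : (B / c) ^ (1 / β) < D) : 0 < c - B * D ^ (-β) := by
  have hD0 : 0 < D := (rpow_nonneg (div_nonneg hB hc.le) _).trans_lt hD
  rw [one_div, rpow_inv_lt_iff_of_pos (div_nonneg hB hc.le) hD0.le hβ, div_lt_iff₀ hc] at hD
  rw [rpow_neg hD0.le, sub_pos, ← div_eq_mul_inv, div_lt_iff₀ (rpow_pos_of_pos hD0 β)]
  linarith

theorem eq11_of_first_order_condition {α β B Dinf E ℓ D : ℝ} (hα : α ≠ 0) (hD : 0 < D)
    (h : 6 * α * (ℓ - E - B * D ^ (-β)) = (6 * D + 2 * Dinf) * (β * B * D ^ (-β - 1))) :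
    0 = (E - ℓ) + (β * B / α + B) * D ^ (-β) + (Dinf * β * B / (3 * α)) * D ^ (-β - 1) := by
  rw [rpow_sub_one hD.ne'] at h ⊢
  field_simp at h ⊢
  linear_combination (1 / 2) * h

theorem local_min_satisfies_eq11_general (A B α β Dinf E ℓ Dstar : ℝ)
    (hA : 0 < A) (hB : 0 < B) (hα : 0 < α) (hβ : 0 < β)
    (hℓ : E < ℓ)
    (hDstar : (B / (ℓ - E)) ^ (1 / β) < Dstar)
    (hmin : IsLocalMinOn
      (fun D : ℝ => (6 * D + 2 * Dinf) * (A / (ℓ - E - B * D ^ (-β))) ^ (1 / α))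
      (Set.Ioi ((B / (ℓ - E)) ^ (1 / β))) Dstar) :
    0 = (E - ℓ) + (β * B / α + B) * Dstar ^ (-β)
      + (Dinf * β * B / (3 * α)) * Dstar ^ (-β - 1) := by
  have hc : 0 < ℓ - E := sub_pos.mpr hℓ
  have hD0 : 0 < Dstar := (rpow_nonneg (div_pos hB hc).le _).trans_lt hDstar
  have hg := sub_mul_rpow_neg_pos hB.le hc hβ hDstar
  have hN := (((hasDerivAt_rpow_const (p := -β) (Or.inl hD0.ne')).const_mul B).const_sub
    (ℓ - E)).const_div_rpow A (1 / α) hg.ne' hA.ne'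
  have hC := (((hasDerivAt_id' Dstar).const_mul 6).add_const (2 * Dinf)).mul hN
  have hcrit := (hmin.isLocalMin (Ioi_mem_nhds hDstar)).hasDerivAt_eq_zero hC
  set g := ℓ - E - B * Dstar ^ (-β)
  set N := (A / g) ^ (1 / α)
  have hN0 : 0 < N := by positivity
  have hfactor : N * (6 * α * g - (6 * Dstar + 2 * Dinf) * (β * B * Dstar ^ (-β - 1))) = 0 := by
    rw [← mul_zero (α * g), ← hcrit]
    field_simp
    ring
  refine eq11_of_first_order_condition hα.ne' hD0 ?_
  linarith [(mul_eq_zero.mp hfactor).resolve_left hN0.ne']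

/-- First-order condition: a local minimum `D* > D_min` of the total compute
`C(D) = (6·D + 2·D_inf)·(A/(ℓ−E−B·D^(−β)))^(1/α)` on `(D_min, ∞)` satisfies Eq. 11. -/
theorem local_min_satisfies_eq11 (A B α β Dinf E ℓ Dstar : ℝ)
    (hA : 0 < A) (hB : 0 < B) (hα : 0 < α) (hβ : 0 < β) (hDinf : 0 ≤ Dinf)
    (hℓ : E < ℓ)
    (hDstar : (B / (ℓ - E)) ^ (1 / β) < Dstar)
    (hmin : IsLocalMinOn
      (fun D : ℝ => (6 * D + 2 * Dinf) * (A / (ℓ - E - B * D ^ (-β))) ^ (1 / α))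
      (Set.Ioi ((B / (ℓ - E)) ^ (1 / β))) Dstar) :
    0 = (E - ℓ) + (β * B / α + B) * Dstar ^ (-β)
      + (Dinf * β * B / (3 * α)) * Dstar ^ (-β - 1) :=
  local_min_satisfies_eq11_general A B α β Dinf E ℓ Dstar hA hB hα hβ hℓ hDstar hmin
end

section
/- Let A, B > 0, α, β > 0, D_inf ≥ 0, E, ℓ be real numbers with ℓ > E, and set D_min = (B/(ℓ − E))^(1/β). Let D* be the unique positive solution of 0 = (E − ℓ) + (β·B/α + B)·D^(−β) + (D_inf·β·B/(3·α))·D^(−β−1). Then D* > D_min, and D* is the unique global minimizer of C(D) = (6·D + 2·D_inf)·(A/(ℓ − E − B·D^(−β)))^(1/α) on (D_min, ∞). -/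
/-!
Write `h(D) = ℓ - E - B D^{-β}` and `t(D) = (A / h(D))^{1/α}`, and let `G(D)` be the right-hand
side of Eq. 11. Differentiating gives `C'(D) = -(6 t(D) / h(D)) · G(D)`, and `h > 0` on
`(D_min, ∞)`, so `C'` has the sign of `-G` there. As `G(D) = (E - ℓ) + c₁ D^{-β} + c₂ D^{-β-1}`
with `c₁ > 0` and `c₂ ≥ 0`, `G` is strictly decreasing on `(0, ∞)`, and `G(D_min) > 0` because
`D_min^{-β} = (ℓ - E) / B`. So the root `D*` of `G` lies above `D_min`, and `C` strictly decreases
on `(D_min, D*]` and strictly increases on `[D*, ∞)`.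
-/

open Real Set

theorem apply_lt_apply_of_hasDerivAt_neg_pos {f f' : ℝ → ℝ} {a x₀ : ℝ} (hx₀ : a < x₀)
    (hf : ∀ x, a < x → HasDerivAt f (f' x) x)
    (hneg : ∀ x, a < x → x < x₀ → f' x < 0) (hpos : ∀ x, x₀ < x → 0 < f' x)
    {x : ℝ} (hx : a < x) (hne : x ≠ x₀) : f x₀ < f x := by
  have hcont : ContinuousOn f (Ioi a) := fun y hy => (hf y hy).continuousAt.continuousWithinAt
  rcases hne.lt_or_gt with hlt | hgt
  · have hanti : StrictAntiOn f (Ioc a x₀) := by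
      refine strictAntiOn_of_hasDerivWithinAt_neg (f' := f') (convex_Ioc a x₀)
        (hcont.mono Ioc_subset_Ioi_self) (fun y hy => ?_) (fun y hy => ?_) <;>
        rw [interior_Ioc] at hy
      exacts [(hf y hy.1).hasDerivWithinAt, hneg y hy.1 hy.2]
    exact hanti ⟨hx, hlt.le⟩ ⟨hx₀, le_rfl⟩ hlt
  · have hmono : StrictMonoOn f (Ici x₀) := by
      refine strictMonoOn_of_hasDerivWithinAt_pos (f' := f') (convex_Ici x₀)
        (hcont.mono (Ici_subset_Ioi.2 hx₀)) (fun y hy => ?_) (fun y hy => ?_) <;>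
        rw [interior_Ici] at hy
      exacts [(hf y (hx₀.trans hy)).hasDerivWithinAt, hpos y hy]
    exact hmono self_mem_Ici hgt.le hgt

namespace ChinchillaCompute

variable (A B α β Dinf E ℓ : ℝ)

noncomputable def dMin : ℝ := (B / (ℓ - E)) ^ (1 / β)

noncomputable def lossGap (D : ℝ) : ℝ := ℓ - E - B * D ^ (-β)

noncomputable def totalCompute (D : ℝ) : ℝ := (6 * D + 2 * Dinf) * (A / lossGap B β E ℓ D) ^ (1 / α)

noncomputable def eq11 (D : ℝ) : ℝ :=
  (E - ℓ) + (β * B / α + B) * D ^ (-β) + (Dinf * β * B / (3 * α)) * D ^ (-β - 1)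

variable {A B α β Dinf E ℓ}

theorem eq11_strictAntiOn (hB : 0 < B) (hα : 0 < α) (hβ : 0 < β) (hDinf : 0 ≤ Dinf) :
    StrictAntiOn (eq11 B α β Dinf E ℓ) (Ioi 0) := by
  intro x hx y _ hxy
  have hpow : y ^ (-β) < x ^ (-β) := rpow_lt_rpow_of_neg hx hxy (neg_neg_of_pos hβ)
  have hpow' : y ^ (-β - 1) ≤ x ^ (-β - 1) := rpow_le_rpow_of_nonpos hx hxy.le (by linarith)
  have h₁ := mul_lt_mul_of_pos_left hpow (by positivity : 0 < β * B / α + B)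
  have h₂ := mul_le_mul_of_nonneg_left hpow' (by positivity : 0 ≤ Dinf * β * B / (3 * α))
  unfold eq11
  linarith

theorem dMin_pos (hB : 0 < B) (hℓ : E < ℓ) : 0 < dMin B β E ℓ :=
  rpow_pos_of_pos (div_pos hB (sub_pos.2 hℓ)) _

theorem dMin_rpow_neg (hB : 0 ≤ B) (hℓ : E < ℓ) (hβ : β ≠ 0) :
    dMin B β E ℓ ^ (-β) = (ℓ - E) / B := by
  rw [dMin, ← rpow_mul (div_nonneg hB (sub_pos.2 hℓ).le), one_div_mul_eq_div, neg_div,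
    div_self hβ, rpow_neg_one, inv_div]

theorem lossGap_pos (hB : 0 < B) (hβ : 0 < β) (hℓ : E < ℓ) {D : ℝ} (hD : dMin B β E ℓ < D) :
    0 < lossGap B β E ℓ D := by
  have hpow : D ^ (-β) < (ℓ - E) / B := by
    rw [← dMin_rpow_neg hB.le hℓ hβ.ne']
    exact rpow_lt_rpow_of_neg (dMin_pos hB hℓ) hD (neg_neg_of_pos hβ)
  rw [lt_div_iff₀ hB] at hpow
  unfold lossGap
  linarith

theorem eq11_dMin_pos (hB : 0 < B) (hα : 0 < α) (hβ : 0 < β) (hDinf : 0 ≤ Dinf) (hℓ : E < ℓ) :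
    0 < eq11 B α β Dinf E ℓ (dMin B β E ℓ) := by
  have hmain : (E - ℓ) + (β * B / α + B) * ((ℓ - E) / B) = β * (ℓ - E) / α := by
    field_simp
    ring
  have hpos : 0 < β * (ℓ - E) / α := div_pos (mul_pos hβ (sub_pos.2 hℓ)) hα
  have hrest : 0 ≤ Dinf * β * B / (3 * α) * dMin B β E ℓ ^ (-β - 1) := by
    have := dMin_pos (β := β) hB hℓ
    positivity
  rw [eq11, dMin_rpow_neg hB.le hℓ hβ.ne', hmain]
  linarith

theorem dMin_lt_of_eq11_eq_zero (hB : 0 < B) (hα : 0 < α) (hβ : 0 < β) (hDinf : 0 ≤ Dinf)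
    (hℓ : E < ℓ) {D : ℝ} (hD : 0 < D) (hroot : eq11 B α β Dinf E ℓ D = 0) :
    dMin B β E ℓ < D :=
  ((eq11_strictAntiOn hB hα hβ hDinf).lt_iff_gt hD (dMin_pos hB hℓ)).1
    (hroot ▸ eq11_dMin_pos hB hα hβ hDinf hℓ)

theorem hasDerivAt_lossGap {D : ℝ} (hD : 0 < D) :
    HasDerivAt (lossGap B β E ℓ) (β * B * D ^ (-β - 1)) D := by
  refine (((hasDerivAt_rpow_const (p := -β) (Or.inl hD.ne')).const_mul B).const_sub
    (ℓ - E)).congr_deriv ?_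
  ring

theorem hasDerivAt_totalCompute (hA : 0 < A) (hα : α ≠ 0) {D : ℝ} (hD : 0 < D)
    (hgap : 0 < lossGap B β E ℓ D) :
    HasDerivAt (totalCompute A B α β Dinf E ℓ)
      (-(6 * (A / lossGap B β E ℓ D) ^ (1 / α) / lossGap B β E ℓ D) * eq11 B α β Dinf E ℓ D)
      D := by
  set h := lossGap B β E ℓ D
  set t := (A / h) ^ (1 / α)
  have hquot : HasDerivAt (fun x => A / lossGap B β E ℓ x)
      (-(A * (β * B * D ^ (-β - 1))) / h ^ 2) D := by
    simpa using (hasDerivAt_const D A).fun_div (hasDerivAt_lossGap hD) hgap.ne'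
  have hpow := hquot.rpow_const (p := 1 / α) (Or.inl (div_pos hA hgap).ne')
  have hlin : HasDerivAt (fun x : ℝ => 6 * x + 2 * Dinf) 6 D := by
    simpa using ((hasDerivAt_id D).const_mul 6).add_const (2 * Dinf)
  refine (hlin.mul hpow).congr_deriv ?_
  have ht : (A / h) ^ (1 / α - 1) = t * h / A := by
    rw [rpow_sub (div_pos hA hgap), rpow_one, div_div_eq_mul_div]
  have hD' : D ^ (-β) = D ^ (-β - 1) * D := by
    rw [← rpow_add_one hD.ne']; ring_nf
  have hEℓ : E - ℓ = -(h + B * (D ^ (-β - 1) * D)) := by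
    rw [← hD']
    change E - ℓ = -(ℓ - E - B * D ^ (-β) + B * D ^ (-β))
    ring
  change 6 * t + (6 * D + 2 * Dinf) * (-(A * (β * B * D ^ (-β - 1))) / h ^ 2 * (1 / α) *
    (A / h) ^ (1 / α - 1)) = -(6 * t / h) * eq11 B α β Dinf E ℓ D
  rw [ht, eq11, hD', hEℓ]
  field_simp
  ring

end ChinchillaCompute

open ChinchillaCompute in
/-- The unique positive solution `D*` of Eq. 11 lies above `D_min` and is the unique
global minimizer of the total compute `C(D)` on `(D_min, ∞)`. -/
theorem eq11_solution_is_global_min (A B α β Dinf E ℓ Dstar : ℝ)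
    (hA : 0 < A) (hB : 0 < B) (hα : 0 < α) (hβ : 0 < β) (hDinf : 0 ≤ Dinf)
    (hℓ : E < ℓ)
    (hDstarpos : 0 < Dstar)
    (hDstar : 0 = (E - ℓ) + (β * B / α + B) * Dstar ^ (-β)
        + (Dinf * β * B / (3 * α)) * Dstar ^ (-β - 1)) :
    (B / (ℓ - E)) ^ (1 / β) < Dstar ∧
    ∀ D : ℝ, (B / (ℓ - E)) ^ (1 / β) < D → D ≠ Dstar →
      (6 * Dstar + 2 * Dinf) * (A / (ℓ - E - B * Dstar ^ (-β))) ^ (1 / α)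
        < (6 * D + 2 * Dinf) * (A / (ℓ - E - B * D ^ (-β))) ^ (1 / α) := by
  have hmin : dMin B β E ℓ < Dstar :=
    dMin_lt_of_eq11_eq_zero hB hα hβ hDinf hℓ hDstarpos hDstar.symm
  have hanti := eq11_strictAntiOn (E := E) (ℓ := ℓ) hB hα hβ hDinf
  have hfactor : ∀ x, dMin B β E ℓ < x →
      0 < 6 * (A / lossGap B β E ℓ x) ^ (1 / α) / lossGap B β E ℓ x := fun x hx => by
    have := lossGap_pos hB hβ hℓ hx
    positivity
  refine ⟨hmin, fun D hD hne => apply_lt_apply_of_hasDerivAt_neg_pos hmin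
    (fun x hx => hasDerivAt_totalCompute hA hα.ne' ((dMin_pos hB hℓ).trans hx)
      (lossGap_pos hB hβ hℓ hx)) (fun x hx hlt => ?_) (fun x hlt => ?_) hD hne⟩
  · have hG : 0 < eq11 B α β Dinf E ℓ x :=
      hDstar ▸ hanti ((dMin_pos hB hℓ).trans hx) hDstarpos hlt
    simpa only [neg_mul, neg_lt_zero] using mul_pos (hfactor x hx) hG
  · have hG : eq11 B α β Dinf E ℓ x < 0 :=
      hDstar ▸ hanti hDstarpos (hDstarpos.trans hlt) hlt
    exact mul_pos_of_neg_of_neg (neg_neg_of_pos (hfactor x (hmin.trans hlt))) hG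
end

section
/- Let A, B > 0, α, β > 0, E, ℓ be real numbers with ℓ > E, let 0 ≤ D_inf1 < D_inf2, and let D1 < D2 be the unique positive solutions of 0 = (E − ℓ) + (β·B/α + B)·D^(−β) + (D_inf·β·B/(3·α))·D^(−β−1) for D_inf = D_inf1 and D_inf = D_inf2 respectively, with corresponding N(D) = (A/(ℓ − E − B·D^(−β)))^(1/α). Then the optimal tokens-per-parameter ratio strictly increases: D1/N(D1) < D2/N(D2). -/
/-- Accounting for inference pushes the compute-optimal configuration to a strictly
higher tokens-per-parameter ratio: with `D1 < D2` the positive solutions of Eq. 11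
for inference demands `D_inf1 < D_inf2` and `N(D) = (A/(ℓ−E−B·D^(−β)))^(1/α)`,
we have `D1/N(D1) < D2/N(D2)`. -/
theorem tokens_per_param_increase (A B α β Dinf1 Dinf2 E ℓ D1 D2 : ℝ)
    (hA : 0 < A) (hB : 0 < B) (hα : 0 < α) (hβ : 0 < β) (hℓ : E < ℓ)
    (hDinf1 : 0 ≤ Dinf1) (hDinf : Dinf1 < Dinf2)
    (hD1pos : 0 < D1) (hD2pos : 0 < D2) (hD12 : D1 < D2)
    (hD1 : 0 = (E - ℓ) + (β * B / α + B) * D1 ^ (-β)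
        + (Dinf1 * β * B / (3 * α)) * D1 ^ (-β - 1))
    (hD2 : 0 = (E - ℓ) + (β * B / α + B) * D2 ^ (-β)
        + (Dinf2 * β * B / (3 * α)) * D2 ^ (-β - 1)) :
    D1 / (A / (ℓ - E - B * D1 ^ (-β))) ^ (1 / α)
      < D2 / (A / (ℓ - E - B * D2 ^ (-β))) ^ (1 / α) := by
  have hDinf2 : 0 ≤ Dinf2 := le_of_lt (lt_of_le_of_lt hDinf1 hDinf)
  have hp1 : (0:ℝ) < D1 ^ (-β) := Real.rpow_pos_of_pos hD1pos _
  have hp2 : (0:ℝ) < D2 ^ (-β) := Real.rpow_pos_of_pos hD2pos _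
  have hq1 : (0:ℝ) < D1 ^ (-β - 1) := Real.rpow_pos_of_pos hD1pos _
  have hq2 : (0:ℝ) < D2 ^ (-β - 1) := Real.rpow_pos_of_pos hD2pos _
  have hc1 : (0:ℝ) ≤ Dinf1 * β * B / (3 * α) := by positivity
  have hc2 : (0:ℝ) ≤ Dinf2 * β * B / (3 * α) := by positivity
  have hbb : (0:ℝ) < β * B / α := by positivity
  -- f(Di) := ℓ - E - B * Di^(-β) is positive
  have hf1 : 0 < ℓ - E - B * D1 ^ (-β) := by nlinarith [mul_nonneg hc1 hq1.le, mul_pos hbb hp1]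
  have hf2 : 0 < ℓ - E - B * D2 ^ (-β) := by nlinarith [mul_nonneg hc2 hq2.le, mul_pos hbb hp2]
  -- f(D1) < f(D2)
  have hplt : D2 ^ (-β) < D1 ^ (-β) :=
    Real.rpow_lt_rpow_of_neg hD1pos hD12 (by linarith)
  have hflt : ℓ - E - B * D1 ^ (-β) < ℓ - E - B * D2 ^ (-β) := by nlinarith
  have hA1 : 0 < A / (ℓ - E - B * D1 ^ (-β)) := div_pos hA hf1
  have hA2 : 0 < A / (ℓ - E - B * D2 ^ (-β)) := div_pos hA hf2
  have hAlt : A / (ℓ - E - B * D2 ^ (-β)) < A / (ℓ - E - B * D1 ^ (-β)) :=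
    div_lt_div_of_pos_left hA hf1 hflt
  have hrlt : (A / (ℓ - E - B * D2 ^ (-β))) ^ (1 / α)
      < (A / (ℓ - E - B * D1 ^ (-β))) ^ (1 / α) :=
    Real.rpow_lt_rpow hA2.le hAlt (by positivity)
  have hr2 : (0:ℝ) < (A / (ℓ - E - B * D2 ^ (-β))) ^ (1 / α) :=
    Real.rpow_pos_of_pos hA2 _
  calc D1 / (A / (ℓ - E - B * D1 ^ (-β))) ^ (1 / α)
      < D1 / (A / (ℓ - E - B * D2 ^ (-β))) ^ (1 / α) :=
        div_lt_div_of_pos_left hD1pos hr2 hrlt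
    _ < D2 / (A / (ℓ - E - B * D2 ^ (-β))) ^ (1 / α) := by
        exact div_lt_div_of_pos_right hD12 hr2
end
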